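/- Let A, B be groups with families of subgroups (A_i)_{i∈I_α}, (B_i)_{i∈I_β} over disjoint finite sets, each satisfying the condition (RC1): for all J with |complement| ≥ 2, the intersection subgroup is generated by the one-step-larger intersections. Define in G = A * B the subgroups G_i = ⟨A_{{i}∩I_α}, B_{{i}∩I_β}⟩ (so G_i = ⟨A_i, B⟩ or ⟨A, B_i⟩). Then (G, (G_i)_{i∈I_α⊔I_β}) also satisfies (RC1): for all J ⊆ I_α ⊔ I_β with |((I_α⊔I_β) ∖ J)| ≥ 2, ⋂_{j∈J} G_j = ⟨G_{J∪{i}} : i ∈ (I_α⊔I_β) ∖ J⟩. -/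

import Mathlib

open scoped Monoid.Coprod

/-!
An element of `A ∗ B` lies in the subgroup `H.coprod K` generated by `H ≤ A` and `K ≤ B` iff
the letters of its reduced word from `A` lie in `H` and those from `B` lie in `K`; hence these
subgroups intersect componentwise: `H₁.coprod K₁ ⊓ H₂.coprod K₂ = (H₁ ⊓ H₂).coprod (K₁ ⊓ K₂)`.

Extend `(A_i)` by `A` on `I_β` and `(B_i)` by `B` on `I_α`; the extended families still satisfy
(RC1), and `G_i` is the `coprod` of the two. Since `coprod` commutes with finite intersections
and with arbitrary joins, (RC1) passes from the two families to `(G_i)`.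
-/

namespace Monoid.CoprodI

variable {ι : Type*} {M : ι → Type*} [∀ i, Group (M i)]

section DecidableEq

variable [DecidableEq ι] [∀ i, DecidableEq (M i)]

namespace Word

def LettersIn (N : ∀ i, Subgroup (M i)) (w : Word M) : Prop :=
  ∀ i m, (⟨i, m⟩ : Σ i, M i) ∈ w.toList → m ∈ N i

theorem LettersIn.of_smul {N : ∀ i, Subgroup (M i)} {w : Word M} (hw : w.LettersIn N) {j : ι}
    {n : M j} (hn : n ∈ N j) : (of n • w).LettersIn N := by
  intro i m hm
  rcases mem_smul_iff.1 hm with ⟨_, hmem⟩ | ⟨_, rfl, htail | ⟨m', hm', rfl⟩ | ⟨_, rfl⟩⟩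
  · exact hw i m hmem
  · exact hw i m (List.mem_of_mem_tail htail)
  · exact mul_mem hn (hw i m' (List.mem_of_mem_head? hm'))
  · exact hn

end Word

theorem mem_iSup_map_of_iff (N : ∀ i, Subgroup (M i)) (x : CoprodI M) :
    x ∈ ⨆ i, (N i).map of ↔ (Word.equiv x).LettersIn N := by
  constructor
  · intro hx
    refine Subgroup.iSup_induction _
      (C := fun x => ∀ w : Word M, w.LettersIn N → (x • w).LettersIn N) hx
      (fun i y hy => ?_) (by simp) (fun y z hy hz w hw => ?_) Word.empty
      fun _ _ h => by simp [Word.empty] at h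
    · obtain ⟨n, hn, rfl⟩ := Subgroup.mem_map.1 hy
      exact fun w hw => hw.of_smul hn
    · rw [mul_smul]
      exact hy _ (hz w hw)
  · intro hx
    rw [← Word.equiv.symm_apply_apply x]
    refine list_prod_mem fun g hg => ?_
    obtain ⟨⟨i, m⟩, hmem, rfl⟩ := List.mem_map.1 hg
    exact Subgroup.mem_iSup_of_mem i (Subgroup.mem_map_of_mem _ (hx i m hmem))

end DecidableEq

theorem iSup_map_of_inf_iSup_map_of (N N' : ∀ i, Subgroup (M i)) :
    (⨆ i, (N i).map of) ⊓ (⨆ i, (N' i).map of) = ⨆ i, (N i ⊓ N' i).map (of : M i →* _) := by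
  classical
  ext x
  simp only [Subgroup.mem_inf, mem_iSup_map_of_iff, Word.LettersIn, ← forall_and]

end Monoid.CoprodI

universe u v

namespace Monoid.Coprod

variable {A : Type u} {B : Type v} [Group A] [Group B]

-- `A ∗ B` embeds into the indexed free product over `Bool`, which has reduced words;
-- `ULift` puts both factors in one universe.
def boolFamily (A : Type u) (B : Type v) (b : Bool) : Type (max u v) :=
  cond b (ULift.{v} A) (ULift.{u} B)

instance : ∀ b, Group (boolFamily A B b)
  | true => inferInstanceAs (Group (ULift A))
  | false => inferInstanceAs (Group (ULift B))

def toCoprodI : A ∗ B →* CoprodI (boolFamily A B) :=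
  lift ((CoprodI.of (i := true)).comp MulEquiv.ulift.symm.toMonoidHom)
    ((CoprodI.of (i := false)).comp MulEquiv.ulift.symm.toMonoidHom)

theorem toCoprodI_injective : Function.Injective (toCoprodI : A ∗ B →* _) := by
  let back : CoprodI (boolFamily A B) →* A ∗ B := CoprodI.lift fun
    | true => inl.comp MulEquiv.ulift.toMonoidHom
    | false => inr.comp MulEquiv.ulift.toMonoidHom
  have : back.comp toCoprodI = .id _ := hom_ext (by ext; rfl) (by ext; rfl)
  exact Function.LeftInverse.injective (DFunLike.congr_fun this)

end Monoid.Coprod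

namespace Subgroup

open Monoid.Coprod

variable {A : Type u} {B : Type v} [Group A] [Group B]

def coprod (H : Subgroup A) (K : Subgroup B) : Subgroup (A ∗ B) :=
  H.map inl ⊔ K.map inr

def boolFamily (H : Subgroup A) (K : Subgroup B) : ∀ b, Subgroup (Monoid.Coprod.boolFamily A B b)
  | true => H.map MulEquiv.ulift.symm.toMonoidHom
  | false => K.map MulEquiv.ulift.symm.toMonoidHom

theorem map_toCoprodI_coprod (H : Subgroup A) (K : Subgroup B) :
    (H.coprod K).map toCoprodI = ⨆ b, (boolFamily H K b).map Monoid.CoprodI.of := by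
  rw [iSup_bool_eq, coprod, map_sup, map_map, map_map, boolFamily, boolFamily, map_map, map_map]
  rfl

theorem coprod_inf_coprod (H₁ H₂ : Subgroup A) (K₁ K₂ : Subgroup B) :
    H₁.coprod K₁ ⊓ H₂.coprod K₂ = (H₁ ⊓ H₂).coprod (K₁ ⊓ K₂) := by
  refine map_injective toCoprodI_injective ?_
  rw [map_inf _ _ _ toCoprodI_injective, map_toCoprodI_coprod, map_toCoprodI_coprod,
    map_toCoprodI_coprod, Monoid.CoprodI.iSup_map_of_inf_iSup_map_of]
  refine iSup_congr fun b => ?_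
  cases b <;> exact congrArg _ (map_inf _ _ _ (MulEquiv.injective _)).symm

theorem top_coprod_top : (⊤ : Subgroup A).coprod (⊤ : Subgroup B) = ⊤ := by
  simp [coprod, ← MonoidHom.range_eq_map]

theorem biInf_coprod {ι : Type*} (s : Finset ι) (H : ι → Subgroup A) (K : ι → Subgroup B) :
    ⨅ i ∈ s, (H i).coprod (K i) = (⨅ i ∈ s, H i).coprod (⨅ i ∈ s, K i) := by
  classical
  induction s using Finset.induction_on with
  | empty => simp [top_coprod_top]
  | insert i s _ ih => simp only [Finset.iInf_insert, ih, coprod_inf_coprod]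

theorem iSup_coprod {ι : Sort*} (H : ι → Subgroup A) (K : ι → Subgroup B) :
    ⨆ i, (H i).coprod (K i) = (⨆ i, H i).coprod (⨆ i, K i) := by
  simp only [coprod, map_iSup, iSup_sup_eq]

end Subgroup

theorem biInf_sumElim_top {L ι κ : Type*} [CompleteLattice L] (f : ι → L) (J : Finset (ι ⊕ κ)) :
    ⨅ j ∈ J, Sum.elim f (fun _ => ⊤) j = ⨅ a ∈ J.toLeft, f a := by
  simp [iInf_sum]

def SatisfiesRC1 {L I : Type*} [CompleteLattice L] [Fintype I] [DecidableEq I] (H : I → L) :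
    Prop :=
  ∀ J : Finset I, 2 ≤ Jᶜ.card → (⨅ j ∈ J, H j) = ⨆ i ∈ Jᶜ, ⨅ j ∈ insert i J, H j

namespace SatisfiesRC1

variable {L : Type*} [CompleteLattice L]

theorem comp_equiv {I I' : Type*} [Fintype I] [DecidableEq I] [Fintype I'] [DecidableEq I']
    {H : I → L} (h : SatisfiesRC1 H) (e : I' ≃ I) : SatisfiesRC1 (H ∘ e) := by
  intro J hJ
  have hcompl : (J.map e.toEmbedding)ᶜ = Jᶜ.map e.toEmbedding := by ext; simp
  have := h (J.map e.toEmbedding) (by rwa [hcompl, Finset.card_map])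
  simp only [← Finset.inf_eq_iInf, ← Finset.sup_eq_iSup, hcompl, Finset.inf_map,
    Finset.sup_map] at this ⊢
  refine this.trans (congrArg Jᶜ.sup (funext fun i => ?_))
  rw [Function.comp_apply, ← Finset.map_insert, Finset.inf_map]
  rfl

theorem sumElim_top {ι κ : Type*} [Fintype ι] [DecidableEq ι] [Fintype κ] [DecidableEq κ]
    {H : ι → L} (h : SatisfiesRC1 H) : SatisfiesRC1 (Sum.elim H fun _ : κ => ⊤) := by
  intro J hJ
  refine le_antisymm ?_ (iSup₂_le fun i _ => biInf_mono (Finset.subset_insert i J))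
  rw [biInf_sumElim_top]
  rcases Jᶜ.toRight.eq_empty_or_nonempty with hR | ⟨b, hb⟩
  · have hcard : 2 ≤ J.toLeftᶜ.card := by
      have hL : Jᶜ.toLeft = J.toLeftᶜ := by ext; simp
      simpa [hL, hR] using hJ.trans_eq Jᶜ.card_toLeft_add_card_toRight.symm
    rw [h _ hcard]
    refine iSup₂_le fun a ha => le_iSup₂_of_le (Sum.inl a) (by simpa using ha) ?_
    rw [biInf_sumElim_top, Finset.toLeft_insert_inl]
  · refine le_iSup₂_of_le (Sum.inr b) (Finset.mem_toRight.1 hb) ?_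
    rw [biInf_sumElim_top, Finset.toLeft_insert_inr]

theorem top_sumElim {ι κ : Type*} [Fintype ι] [DecidableEq ι] [Fintype κ] [DecidableEq κ]
    {H : κ → L} (h : SatisfiesRC1 H) : SatisfiesRC1 (Sum.elim (fun _ : ι => ⊤) H) := by
  simpa using (h.sumElim_top (κ := ι)).comp_equiv (Equiv.sumComm ι κ)

end SatisfiesRC1

theorem SatisfiesRC1.coprod {A B I : Type*} [Group A] [Group B] [Fintype I] [DecidableEq I]
    {H : I → Subgroup A} {K : I → Subgroup B} (hH : SatisfiesRC1 H) (hK : SatisfiesRC1 K) :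
    SatisfiesRC1 fun i => (H i).coprod (K i) := by
  intro J hJ
  simp only [Subgroup.biInf_coprod, Subgroup.iSup_coprod, hH J hJ, hK J hJ]

/-- If the families `(A_i)` and `(B_i)` both satisfy (RC1), then the family
`(G_i)` of maximal parabolic subgroups of the free product `A ∗ B` also satisfies (RC1). -/
theorem stmt_11 {A B : Type*} [Group A] [Group B]
    {Iα Iβ : Type*} [Fintype Iα] [Fintype Iβ] [DecidableEq Iα] [DecidableEq Iβ]
    (Ai : Iα → Subgroup A) (Bi : Iβ → Subgroup B)
    (hRCA : ∀ J : Finset Iα, 2 ≤ Jᶜ.card →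
      (⨅ j ∈ J, Ai j) = ⨆ i ∈ Jᶜ, ⨅ j ∈ insert i J, Ai j)
    (hRCB : ∀ J : Finset Iβ, 2 ≤ Jᶜ.card →
      (⨅ j ∈ J, Bi j) = ⨆ i ∈ Jᶜ, ⨅ j ∈ insert i J, Bi j)
    (Gi : Iα ⊕ Iβ → Subgroup (A ∗ B))
    (hGα : ∀ i : Iα, Gi (Sum.inl i)
        = (Ai i).map (Monoid.Coprod.inl : A →* A ∗ B)
          ⊔ (⊤ : Subgroup B).map (Monoid.Coprod.inr : B →* A ∗ B))
    (hGβ : ∀ i : Iβ, Gi (Sum.inr i)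
        = (⊤ : Subgroup A).map (Monoid.Coprod.inl : A →* A ∗ B)
          ⊔ (Bi i).map (Monoid.Coprod.inr : B →* A ∗ B)) :
    ∀ J : Finset (Iα ⊕ Iβ), 2 ≤ Jᶜ.card →
      (⨅ j ∈ J, Gi j) = ⨆ i ∈ Jᶜ, ⨅ j ∈ insert i J, Gi j := by
  obtain rfl : Gi = fun j => (Sum.elim Ai (fun _ => ⊤) j).coprod (Sum.elim (fun _ => ⊤) Bi j) :=
    funext (Sum.rec hGα hGβ)
  exact SatisfiesRC1.coprod (SatisfiesRC1.sumElim_top hRCA) (SatisfiesRC1.top_sumElim hRCB)
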